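/- Let A be a real d×d matrix and let φ₁, φ₂ be mild solutions with matrix A. Suppose that for some p > 0 and B > 0 the initial data satisfy |φ₁(k,0) − φ₂(k,0)| ≤ B|k|^p for all k ∈ ℝ^d. Then |φ₁(k,t) − φ₂(k,t)| ≤ B|k|^p exp(−(λ(p) − p‖A‖)t) for all k ∈ ℝ^d and t ≥ 0. -/

import Mathlib

open MeasureTheory
open scoped Classical Matrix
noncomputable section

/-- ℝ^d with the Euclidean structure. -/
abbrev Rd (d : ℕ) := EuclideanSpace ℝ (Fin d)

/-- The unit sphere S^{d-1} in ℝ^d. -/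
abbrev Sd (d : ℕ) := Metric.sphere (0 : Rd d) 1

/-- The surface measure on the unit sphere. -/
noncomputable def sphMeasure (d : ℕ) : Measure (Sd d) :=
  (volume : Measure (Rd d)).toSphere

/-- k₊ = (k + |k| n)/2. -/
noncomputable def kplus {d : ℕ} (k : Rd d) (n : Sd d) : Rd d :=
  (2⁻¹ : ℝ) • (k + ‖k‖ • (n : Rd d))

/-- k₋ = (k − |k| n)/2. -/
noncomputable def kminus {d : ℕ} (k : Rd d) (n : Sd d) : Rd d :=
  (2⁻¹ : ℝ) • (k - ‖k‖ • (n : Rd d))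

/-- k̂·n for k ≠ 0. -/
noncomputable def khatDot {d : ℕ} (k : Rd d) (n : Sd d) : ℝ :=
  inner ℝ (‖k‖⁻¹ • k) (n : Rd d)

/-- The gain operator I⁺(φ,ψ). -/
noncomputable def Iplus {d : ℕ} (g : ℝ → ℝ) (φ ψ : Rd d → ℂ) (k : Rd d) : ℂ :=
  if k = 0 then φ 0 * ψ 0
  else ∫ n, (g (khatDot k n) : ℂ) * φ (kplus k n) * ψ (kminus k n) ∂(sphMeasure d)

/-- Γ[φ] = I⁺(φ,φ). -/
noncomputable def Gam {d : ℕ} (g : ℝ → ℝ) (φ : Rd d → ℂ) : Rd d → ℂ :=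
  Iplus g φ φ

/-- The linearized operator L, complex-valued version. -/
noncomputable def LopC {d : ℕ} (g : ℝ → ℝ) (ψ : Rd d → ℂ) (k : Rd d) : ℂ :=
  if k = 0 then 2 * ψ 0
  else ∫ n, (g (khatDot k n) : ℂ) * (ψ (kplus k n) + ψ (kminus k n)) ∂(sphMeasure d)

/-- The linearized operator L, real-valued version. -/
noncomputable def LopR {d : ℕ} (g : ℝ → ℝ) (ψ : Rd d → ℝ) (k : Rd d) : ℝ :=
  if k = 0 then 2 * ψ 0
  else ∫ n, g (khatDot k n) * (ψ (kplus k n) + ψ (kminus k n)) ∂(sphMeasure d)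

/-- The Fourier transform (characteristic function) of a measure. -/
noncomputable def charFun {d : ℕ} (μ : Measure (Rd d)) (k : Rd d) : ℂ :=
  ∫ v, Complex.exp (-(Complex.I * ((inner ℝ k v : ℝ) : ℂ))) ∂μ

/-- φ is the characteristic function of a Borel probability measure on ℝ^d. -/
def IsCharFun {d : ℕ} (φ : Rd d → ℂ) : Prop :=
  ∃ μ : Measure (Rd d), IsProbabilityMeasure μ ∧ φ = _root_.charFun μ

/-- A matrix acting on ℝ^d as a continuous linear map. -/
noncomputable def matCLM {d : ℕ} (A : Matrix (Fin d) (Fin d) ℝ) : Rd d →L[ℝ] Rd d :=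
  LinearMap.toContinuousLinearMap (Matrix.toEuclideanLin A)

/-- The operator norm ‖A‖ = sup_{|k|=1} |Ak|. -/
noncomputable def opN {d : ℕ} (A : Matrix (Fin d) (Fin d) ℝ) : ℝ := ‖matCLM A‖

/-- e^{tA} k, matrix exponential applied to a vector. -/
noncomputable def expA {d : ℕ} (A : Matrix (Fin d) (Fin d) ℝ) (t : ℝ) (k : Rd d) : Rd d :=
  matCLM (NormedSpace.exp (t • A)) k

/-- A mild solution of the Fourier-transformed equation ∂ₜφ + φ + (Ak)·∂ₖφ = Γ[φ]. -/
def IsMildSolution {d : ℕ} (g : ℝ → ℝ) (A : Matrix (Fin d) (Fin d) ℝ)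
    (φ₀ : Rd d → ℂ) (φ : ℝ → Rd d → ℂ) : Prop :=
  (∀ t, 0 ≤ t → IsCharFun (φ t)) ∧
  (∀ t, 0 ≤ t → ∀ ε > (0:ℝ), ∃ δ > (0:ℝ), ∀ s, 0 ≤ s → |s - t| < δ →
      ∀ k, ‖φ s k - φ t k‖ ≤ ε) ∧
  (∀ t, 0 ≤ t → ∀ k, φ t k =
      (Real.exp (-t) : ℂ) * φ₀ (expA A (-t) k)
        + ∫ τ in (0:ℝ)..t, (Real.exp (-(t - τ)) : ℂ) * Gam g (φ τ) (expA A (-(t - τ)) k))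


open scoped RealInnerProductSpace

/-!
Subtracting the Duhamel formulas of the two solutions leaves the difference of the initial data,
transported along the characteristics `k ↦ e^{-tA} k`, plus the time integral of the difference of
the gain terms. Since characteristic functions are bounded by `1`,
`|ab - a'b'| ≤ |b - b'| + |a - a'|`, so a bound `M |x|^p + c` on `φ - ψ` evaluated at `k₊` and
`k₋` yields, through `|k₊|^p + |k₋|^p = |k|^p Ψ(k̂·n)` (with `Ψ = splitPowSum p`) and
`∫ g Ψ = 1 - λ(p)`, the bound `(1 - λ(p)) M |k|^p + 2c` on `Γ[φ] - Γ[ψ]`; along the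
characteristics `|k|^p` grows at most like `e^{p‖A‖t}`. Starting from the trivial bound `2` and
iterating the Duhamel formula `n` times gives
`|φ₁ - φ₂|(t, k) ≤ B |k|^p e^{-(1 - p‖A‖)t} ∑_{j<n} ((1-λ(p))t)^j / j! + 2 (2t)^n / n!`,
and `n → ∞` gives the claim.
-/

open NormedSpace

theorem norm_exp_le_exp_norm {𝔸 : Type*} [NormedRing 𝔸] [NormedAlgebra ℝ 𝔸] [CompleteSpace 𝔸]
    (h1 : ‖(1 : 𝔸)‖ ≤ 1) (x : 𝔸) : ‖exp x‖ ≤ Real.exp ‖x‖ := by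
  have hpow : ∀ n, ‖x ^ n‖ ≤ ‖x‖ ^ n
    | 0 => by simpa using h1
    | n + 1 => norm_pow_le' x n.succ_pos
  rw [exp_eq_tsum ℝ, Real.exp_eq_exp_ℝ, exp_eq_tsum_div]
  refine (norm_tsum_le_tsum_norm (norm_expSeries_summable' x)).trans ?_
  refine (norm_expSeries_summable' x).tsum_le_tsum (fun n => ?_)
    (Real.summable_pow_div_factorial ‖x‖)
  rw [norm_smul, norm_inv, RCLike.norm_natCast, div_eq_inv_mul]
  exact mul_le_mul_of_nonneg_left (hpow n) (by positivity)

section Flow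
variable {d : ℕ} (A : Matrix (Fin d) (Fin d) ℝ)

section
-- `map_exp` wants a Banach algebra; `exp` on matrices depends only on their topology.
attribute [local instance] Matrix.linftyOpNormedRing Matrix.linftyOpNormedAlgebra

lemma expA_apply (s : ℝ) (k : Rd d) : expA A s k = exp (s • matCLM A) k := by
  let e := Matrix.toEuclideanCLM (n := Fin d) (𝕜 := ℝ)
  have he : Continuous e := LinearMap.continuous_of_finiteDimensional e.toAlgEquiv.toLinearMap
  have hexp : matCLM (exp (s • A)) = exp (s • matCLM A) := by
    rw [show s • matCLM A = e (s • A) from (map_smul e s A).symm]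
    exact map_exp e he _
  rw [expA, hexp]

end

lemma norm_expA_apply_le (s : ℝ) (k : Rd d) : ‖expA A s k‖ ≤ Real.exp (|s| * opN A) * ‖k‖ := by
  rw [expA_apply]
  refine (ContinuousLinearMap.le_opNorm _ _).trans (mul_le_mul_of_nonneg_right ?_ (norm_nonneg k))
  refine (norm_exp_le_exp_norm ContinuousLinearMap.norm_id_le _).trans_eq ?_
  rw [norm_smul, Real.norm_eq_abs, opN]

lemma rpow_norm_expA_neg_le {p s : ℝ} (hp : 0 ≤ p) (hs : 0 ≤ s) (k : Rd d) :
    ‖expA A (-s) k‖ ^ p ≤ Real.exp (p * opN A * s) * ‖k‖ ^ p := by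
  have h := norm_expA_apply_le A (-s) k
  rw [abs_neg, abs_of_nonneg hs] at h
  calc ‖expA A (-s) k‖ ^ p ≤ (Real.exp (s * opN A) * ‖k‖) ^ p :=
        Real.rpow_le_rpow (norm_nonneg _) h hp
    _ = Real.exp (p * opN A * s) * ‖k‖ ^ p := by
        rw [Real.mul_rpow (Real.exp_nonneg _) (norm_nonneg _), ← Real.exp_mul]; ring_nf

lemma continuous_expA_apply (k : Rd d) : Continuous fun s => expA A s k := by
  let _ : NormedAlgebra ℚ (Rd d →L[ℝ] Rd d) := .restrictScalars ℚ ℝ _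
  simp_rw [expA_apply]
  fun_prop

end Flow

lemma charFun_eq_charFun_neg {d : ℕ} (μ : Measure (Rd d)) (k : Rd d) :
    _root_.charFun μ k = MeasureTheory.charFun μ (-k) := by
  simp only [_root_.charFun, MeasureTheory.charFun_apply, inner_neg_right, real_inner_comm k]
  congr 1; ext v; congr 1; push_cast; ring

namespace IsCharFun
variable {d : ℕ} {φ : Rd d → ℂ}

lemma norm_le_one (h : IsCharFun φ) (k : Rd d) : ‖φ k‖ ≤ 1 := by
  obtain ⟨μ, hμ, rfl⟩ := h
  rw [charFun_eq_charFun_neg]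
  exact norm_charFun_le_one _

protected lemma continuous (h : IsCharFun φ) : Continuous φ := by
  obtain ⟨μ, hμ, rfl⟩ := h
  rw [funext (charFun_eq_charFun_neg μ)]
  exact continuous_charFun.comp continuous_neg

end IsCharFun

section SphereGeometry
variable {d : ℕ}

lemma norm_coe_sphere (n : Sd d) : ‖(n : Rd d)‖ = 1 := mem_sphere_zero_iff_norm.mp n.2

lemma abs_inner_sphere_le_one {ω : Rd d} (hω : ‖ω‖ = 1) (n : Sd d) : |⟪ω, (n : Rd d)⟫| ≤ 1 :=
  (abs_real_inner_le_norm _ _).trans_eq (by rw [hω, norm_coe_sphere, one_mul])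

lemma norm_inv_smul_self {k : Rd d} (hk : k ≠ 0) : ‖(‖k‖⁻¹ • k : Rd d)‖ = 1 := by
  rw [norm_smul, norm_inv, norm_norm, inv_mul_cancel₀ (norm_ne_zero_iff.mpr hk)]

lemma abs_khatDot_le_one (k : Rd d) (n : Sd d) : |khatDot k n| ≤ 1 := by
  rcases eq_or_ne k 0 with rfl | hk
  · simp [khatDot]
  · exact abs_inner_sphere_le_one (norm_inv_smul_self hk) n

lemma inner_eq_norm_mul_khatDot (k : Rd d) (n : Sd d) : ⟪k, (n : Rd d)⟫ = ‖k‖ * khatDot k n := by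
  rcases eq_or_ne k 0 with rfl | hk
  · simp
  · rw [khatDot, real_inner_smul_left, mul_inv_cancel_left₀ (norm_ne_zero_iff.mpr hk)]

lemma khatDot_neg (k : Rd d) (n : Sd d) : khatDot k (-n) = -khatDot k n := by
  simp [khatDot]

lemma kminus_eq_kplus_neg (k : Rd d) (n : Sd d) : kminus k n = kplus k (-n) := by
  simp [kminus, kplus, sub_eq_add_neg]

lemma sq_norm_kplus (k : Rd d) (n : Sd d) :
    ‖kplus k n‖ ^ 2 = ‖k‖ ^ 2 * ((1 + khatDot k n) / 2) := by
  rw [kplus, norm_smul, mul_pow, norm_add_sq_real, real_inner_smul_right,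
    inner_eq_norm_mul_khatDot, norm_smul, norm_norm, norm_coe_sphere]
  norm_num
  ring

lemma norm_kplus_rpow (p : ℝ) (k : Rd d) (n : Sd d) :
    ‖kplus k n‖ ^ p = ‖k‖ ^ p * ((1 + khatDot k n) / 2) ^ (p / 2) := by
  have hsq : ∀ x : ℝ, 0 ≤ x → x ^ p = (x ^ 2) ^ (p / 2) := fun x hx => by
    rw [← Real.rpow_natCast, ← Real.rpow_mul hx]; ring_nf
  have hc : 0 ≤ (1 + khatDot k n) / 2 := by
    linarith [neg_abs_le (khatDot k n), abs_khatDot_le_one k n]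
  rw [hsq _ (norm_nonneg _), hsq _ (norm_nonneg k), sq_norm_kplus,
    Real.mul_rpow (sq_nonneg _) hc]

lemma norm_kminus_rpow (p : ℝ) (k : Rd d) (n : Sd d) :
    ‖kminus k n‖ ^ p = ‖k‖ ^ p * ((1 - khatDot k n) / 2) ^ (p / 2) := by
  rw [kminus_eq_kplus_neg, norm_kplus_rpow, khatDot_neg, ← sub_eq_add_neg]

end SphereGeometry

def splitPowSum (p s : ℝ) : ℝ := ((1 + s) / 2) ^ (p / 2) + ((1 - s) / 2) ^ (p / 2)

lemma norm_kplus_rpow_add_norm_kminus_rpow {d : ℕ} (p : ℝ) (k : Rd d) (n : Sd d) :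
    ‖kplus k n‖ ^ p + ‖kminus k n‖ ^ p = ‖k‖ ^ p * splitPowSum p (khatDot k n) := by
  rw [norm_kplus_rpow, norm_kminus_rpow, splitPowSum, mul_add]

lemma measurable_splitPowSum (p : ℝ) : Measurable (splitPowSum p) := by
  unfold splitPowSum; fun_prop

lemma splitPowSum_nonneg (p : ℝ) {s : ℝ} (hs : |s| ≤ 1) : 0 ≤ splitPowSum p s := by
  have := abs_le.mp hs
  exact add_nonneg (Real.rpow_nonneg (by linarith) _) (Real.rpow_nonneg (by linarith) _)

lemma splitPowSum_le_two {p s : ℝ} (hp : 0 ≤ p) (hs : |s| ≤ 1) : splitPowSum p s ≤ 2 := by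
  have := abs_le.mp hs
  have h₁ := Real.rpow_le_one (x := (1 + s) / 2) (by linarith) (by linarith) (z := p / 2)
    (by linarith)
  have h₂ := Real.rpow_le_one (x := (1 - s) / 2) (by linarith) (by linarith) (z := p / 2)
    (by linarith)
  unfold splitPowSum; linarith

section Kernel
variable {d : ℕ} {g : ℝ → ℝ}

lemma integrable_mul_splitPowSum {p : ℝ} (hp : 0 ≤ p) (hg_nonneg : ∀ x, 0 ≤ g x) {ω : Rd d}
    (hω : ‖ω‖ = 1) (hg : ∫ n, g ⟪ω, (n : Rd d)⟫ ∂(sphMeasure d) = 1) :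
    Integrable (fun n : Sd d => g ⟪ω, (n : Rd d)⟫ * splitPowSum p ⟪ω, (n : Rd d)⟫)
      (sphMeasure d) := by
  have hint := integrable_of_integral_eq_one hg
  refine (hint.const_mul 2).mono' (hint.aestronglyMeasurable.mul ?_) (.of_forall fun n => ?_)
  · exact ((measurable_splitPowSum p).comp (by fun_prop)).aestronglyMeasurable
  · have hs := abs_inner_sphere_le_one hω n
    rw [Real.norm_eq_abs, abs_of_nonneg (mul_nonneg (hg_nonneg _) (splitPowSum_nonneg p hs)),
      mul_comm 2]
    exact mul_le_mul_of_nonneg_left (splitPowSum_le_two hp hs) (hg_nonneg _)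

lemma integral_mul_splitPowSum_eq {p lam : ℝ} (hp : 0 ≤ p) (hg_nonneg : ∀ x, 0 ≤ g x)
    {ω : Rd d} (hω : ‖ω‖ = 1) (hg : ∫ n, g ⟪ω, (n : Rd d)⟫ ∂(sphMeasure d) = 1)
    (hlam : (∫ n, g ⟪ω, (n : Rd d)⟫ *
          (1 - ((1 + ⟪ω, (n : Rd d)⟫) / 2) ^ (p / 2)
             - ((1 - ⟪ω, (n : Rd d)⟫) / 2) ^ (p / 2)) ∂(sphMeasure d)) = lam) :
    ∫ n, g ⟪ω, (n : Rd d)⟫ * splitPowSum p ⟪ω, (n : Rd d)⟫ ∂(sphMeasure d) = 1 - lam := by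
  have hsplit : (∫ n, g ⟪ω, (n : Rd d)⟫ *
          (1 - ((1 + ⟪ω, (n : Rd d)⟫) / 2) ^ (p / 2)
             - ((1 - ⟪ω, (n : Rd d)⟫) / 2) ^ (p / 2)) ∂(sphMeasure d))
      = ∫ n, g ⟪ω, (n : Rd d)⟫ ∂(sphMeasure d)
        - ∫ n, g ⟪ω, (n : Rd d)⟫ * splitPowSum p ⟪ω, (n : Rd d)⟫ ∂(sphMeasure d) := by
    rw [← integral_sub (integrable_of_integral_eq_one hg)
      (integrable_mul_splitPowSum hp hg_nonneg hω hg)]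
    congr 1; ext n; unfold splitPowSum; ring
  linarith

lemma nonneg_of_integral_mul_splitPowSum_eq {p θ : ℝ} (hd : 0 < d) (hg_nonneg : ∀ x, 0 ≤ g x)
    (hθ : ∀ ω : Rd d, ‖ω‖ = 1 →
      ∫ n, g ⟪ω, (n : Rd d)⟫ * splitPowSum p ⟪ω, (n : Rd d)⟫ ∂(sphMeasure d) = θ) :
    0 ≤ θ := by
  have : Nonempty (Fin d) := ⟨⟨0, hd⟩⟩
  obtain ⟨ω, hω⟩ := (NormedSpace.sphere_nonempty (E := Rd d)).mpr zero_le_one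
  rw [← hθ ω (mem_sphere_zero_iff_norm.mp hω)]
  exact integral_nonneg fun n =>
    mul_nonneg (hg_nonneg _) (splitPowSum_nonneg p (abs_inner_sphere_le_one (by simpa using hω) n))

end Kernel

structure IsCollisionKernel (d : ℕ) (g : ℝ → ℝ) : Prop where
  measurable : Measurable g
  nonneg : ∀ x, 0 ≤ g x
  integral_eq_one : ∀ ω : Rd d, ‖ω‖ = 1 → ∫ n, g ⟪ω, (n : Rd d)⟫ ∂(sphMeasure d) = 1

lemma norm_mul_sub_mul_le {a b a' b' : ℂ} (ha : ‖a‖ ≤ 1) (hb' : ‖b'‖ ≤ 1) :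
    ‖a * b - a' * b'‖ ≤ ‖b - b'‖ + ‖a - a'‖ := by
  rw [show a * b - a' * b' = a * (b - b') + (a - a') * b' by ring]
  refine (norm_add_le _ _).trans (add_le_add ?_ ?_) <;> rw [norm_mul]
  · exact mul_le_of_le_one_left (norm_nonneg _) ha
  · exact mul_le_of_le_one_right (norm_nonneg _) hb'

section Gain
variable {d : ℕ} {g : ℝ → ℝ} {φ ψ : Rd d → ℂ}

lemma norm_gain_integrand_le (hg_nonneg : ∀ x, 0 ≤ g x) (hφ : ∀ x, ‖φ x‖ ≤ 1)
    (hψ : ∀ x, ‖ψ x‖ ≤ 1) (k : Rd d) (n : Sd d) :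
    ‖(g (khatDot k n) : ℂ) * φ (kplus k n) * ψ (kminus k n)‖ ≤ g (khatDot k n) := by
  rw [norm_mul, norm_mul, Complex.norm_real, Real.norm_of_nonneg (hg_nonneg _), mul_assoc]
  exact mul_le_of_le_one_right (hg_nonneg _) (mul_le_one₀ (hφ _) (norm_nonneg _) (hψ _))

lemma norm_gain_integrand_sub_le (hg_nonneg : ∀ x, 0 ≤ g x) {p M c : ℝ}
    (hφ : ∀ x, ‖φ x‖ ≤ 1) (hψ : ∀ x, ‖ψ x‖ ≤ 1) (hβ : ∀ x, ‖φ x - ψ x‖ ≤ M * ‖x‖ ^ p + c)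
    (k : Rd d) (n : Sd d) :
    ‖(g (khatDot k n) : ℂ) * φ (kplus k n) * φ (kminus k n)
        - (g (khatDot k n) : ℂ) * ψ (kplus k n) * ψ (kminus k n)‖ ≤
      M * ‖k‖ ^ p * (g (khatDot k n) * splitPowSum p (khatDot k n)) + 2 * c * g (khatDot k n) := by
  have hg := hg_nonneg (khatDot k n)
  rw [mul_assoc, mul_assoc, ← mul_sub, norm_mul, Complex.norm_real, Real.norm_of_nonneg hg]
  calc _ ≤ g (khatDot k n) * ((M * ‖kminus k n‖ ^ p + c) + (M * ‖kplus k n‖ ^ p + c)) :=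
        mul_le_mul_of_nonneg_left ((norm_mul_sub_mul_le (hφ _) (hψ _)).trans
          (add_le_add (hβ _) (hβ _))) hg
    _ = _ := by
        linear_combination g (khatDot k n) * M * norm_kplus_rpow_add_norm_kminus_rpow p k n

lemma integrable_gain_integrand (hg_meas : Measurable g) (hg_nonneg : ∀ x, 0 ≤ g x)
    (hφ : ∀ x, ‖φ x‖ ≤ 1) (hψ : ∀ x, ‖ψ x‖ ≤ 1) (hφm : Measurable φ) (hψm : Measurable ψ)
    {k : Rd d} (hk : ∫ n, g (khatDot k n) ∂(sphMeasure d) = 1) :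
    Integrable (fun n => (g (khatDot k n) : ℂ) * φ (kplus k n) * ψ (kminus k n))
      (sphMeasure d) := by
  refine (integrable_of_integral_eq_one hk).mono' ?_
    (.of_forall (norm_gain_integrand_le hg_nonneg hφ hψ k))
  unfold khatDot kplus kminus
  fun_prop

lemma norm_Gam_le_one (hg_nonneg : ∀ x, 0 ≤ g x)
    (hg_norm : ∀ ω : Rd d, ‖ω‖ = 1 → ∫ n, g ⟪ω, (n : Rd d)⟫ ∂(sphMeasure d) = 1)
    (hφ : ∀ x, ‖φ x‖ ≤ 1) (k : Rd d) : ‖Gam g φ k‖ ≤ 1 := by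
  unfold Gam Iplus
  split_ifs with hk
  · rw [norm_mul]; exact mul_le_one₀ (hφ 0) (norm_nonneg _) (hφ 0)
  · have hk1 : ∫ n, g (khatDot k n) ∂(sphMeasure d) = 1 := hg_norm _ (norm_inv_smul_self hk)
    rw [← hk1]
    exact norm_integral_le_of_norm_le (integrable_of_integral_eq_one hk1)
      (.of_forall (norm_gain_integrand_le hg_nonneg hφ hφ k))

lemma IsCollisionKernel.norm_Gam_sub_le (hg : IsCollisionKernel d g) {p θ : ℝ} (hp : 0 < p)
    (hθ : ∀ ω : Rd d, ‖ω‖ = 1 →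
      ∫ n, g ⟪ω, (n : Rd d)⟫ * splitPowSum p ⟪ω, (n : Rd d)⟫ ∂(sphMeasure d) = θ)
    (hφ : ∀ x, ‖φ x‖ ≤ 1) (hψ : ∀ x, ‖ψ x‖ ≤ 1) (hφm : Measurable φ) (hψm : Measurable ψ)
    {M c : ℝ} (hβ : ∀ x, ‖φ x - ψ x‖ ≤ M * ‖x‖ ^ p + c) (k : Rd d) :
    ‖Gam g φ k - Gam g ψ k‖ ≤ M * θ * ‖k‖ ^ p + 2 * c := by
  unfold Gam Iplus
  split_ifs with hk
  · have h0 : ‖(0 : Rd d)‖ ^ p = 0 := by rw [norm_zero, Real.zero_rpow hp.ne']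
    have hβ0 := hβ 0
    rw [h0, mul_zero, zero_add] at hβ0
    rw [hk, h0, mul_zero, zero_add]
    linarith [norm_mul_sub_mul_le (b := φ 0) (a' := ψ 0) (hφ 0) (hψ 0)]
  have hω := norm_inv_smul_self hk
  have hg1 : ∫ n, g (khatDot k n) ∂(sphMeasure d) = 1 := hg.integral_eq_one _ hω
  have hgθ : ∫ n, g (khatDot k n) * splitPowSum p (khatDot k n) ∂(sphMeasure d) = θ := hθ _ hω
  have hgi : Integrable (fun n => g (khatDot k n)) (sphMeasure d) :=
    integrable_of_integral_eq_one hg1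
  have hgψ : Integrable (fun n => g (khatDot k n) * splitPowSum p (khatDot k n)) (sphMeasure d) :=
    integrable_mul_splitPowSum hp.le hg.nonneg hω hg1
  rw [← integral_sub (integrable_gain_integrand hg.measurable hg.nonneg hφ hφ hφm hφm hg1)
    (integrable_gain_integrand hg.measurable hg.nonneg hψ hψ hψm hψm hg1)]
  calc _ ≤ ∫ n, (M * ‖k‖ ^ p * (g (khatDot k n) * splitPowSum p (khatDot k n))
          + 2 * c * g (khatDot k n)) ∂(sphMeasure d) :=
        norm_integral_le_of_norm_le ((hgψ.const_mul _).add (hgi.const_mul _))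
          (.of_forall (norm_gain_integrand_sub_le hg.nonneg hφ hψ hβ k))
    _ = M * θ * ‖k‖ ^ p + 2 * c := by
        rw [integral_add (hgψ.const_mul _) (hgi.const_mul _), integral_const_mul,
          integral_const_mul, hgθ, hg1]
        ring

lemma IsCollisionKernel.exp_mul_norm_Gam_sub_le (hg : IsCollisionKernel d g)
    (A : Matrix (Fin d) (Fin d) ℝ) {p θ : ℝ} (hp : 0 < p)
    (hθ : ∀ ω : Rd d, ‖ω‖ = 1 →
      ∫ n, g ⟪ω, (n : Rd d)⟫ * splitPowSum p ⟪ω, (n : Rd d)⟫ ∂(sphMeasure d) = θ)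
    (hφ : IsCharFun φ) (hψ : IsCharFun ψ) {M c : ℝ} (hMθ : 0 ≤ M * θ) (hc : 0 ≤ c)
    (hβ : ∀ x, ‖φ x - ψ x‖ ≤ M * ‖x‖ ^ p + c) {s : ℝ} (hs : 0 ≤ s) (k : Rd d) :
    Real.exp (-s) * ‖Gam g φ (expA A (-s) k) - Gam g ψ (expA A (-s) k)‖ ≤
      M * θ * Real.exp (-(1 - p * opN A) * s) * ‖k‖ ^ p + 2 * c := by
  have hexp : Real.exp (-s) ≤ 1 := Real.exp_le_one_iff.mpr (neg_nonpos.mpr hs)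
  calc _ ≤ Real.exp (-s) * (M * θ * ‖expA A (-s) k‖ ^ p + 2 * c) :=
        mul_le_mul_of_nonneg_left (hg.norm_Gam_sub_le hp hθ hφ.norm_le_one hψ.norm_le_one
          hφ.continuous.measurable hψ.continuous.measurable hβ _) (Real.exp_nonneg _)
    _ ≤ Real.exp (-s) * (M * θ * (Real.exp (p * opN A * s) * ‖k‖ ^ p)) + 2 * c := by
        rw [mul_add]
        refine add_le_add ?_ (mul_le_of_le_one_left (by positivity) hexp)
        gcongr
        exact rpow_norm_expA_neg_le A hp.le hs k
    _ = M * θ * Real.exp (-(1 - p * opN A) * s) * ‖k‖ ^ p + 2 * c := by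
        rw [show -(1 - p * opN A) * s = -s + p * opN A * s by ring, Real.exp_add]; ring

end Gain

open Filter Topology in
lemma continuous_uncurry_of_tendstoUniformly {X Y E : Type*} [TopologicalSpace X]
    [TopologicalSpace Y] [UniformSpace E] {F : X → Y → E} (hc : ∀ x, Continuous (F x))
    (hu : ∀ x, TendstoUniformly F (F x) (𝓝 x)) : Continuous (Function.uncurry F) := by
  refine continuous_iff_continuousAt.2 fun z => ?_
  have hz : TendstoUniformly (fun w : X × Y => F w.1) (F z.1) (𝓝 z) := by
    have hz₁ := hu z.1
    rw [tendstoUniformly_iff_tendsto] at hz₁ ⊢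
    exact hz₁.comp ((continuous_fst.tendsto z).prodMap tendsto_id)
  exact hz.tendsto_comp (hc z.1).continuousAt (continuous_snd.tendsto z)

instance {d : ℕ} : IsFiniteMeasure (sphMeasure d) := by
  unfold sphMeasure; infer_instance

lemma measurable_Gam_uncurry {d : ℕ} {g : ℝ → ℝ} (hg_meas : Measurable g)
    {F : ℝ → Rd d → ℂ} (hF : Continuous (Function.uncurry F)) :
    Measurable fun x : ℝ × Rd d => Gam g (F x.1) x.2 := by
  unfold Gam Iplus
  refine Measurable.ite (measurableSet_eq_fun measurable_snd measurable_const) ?_ ?_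
  · have hF0 : Continuous fun x : ℝ × Rd d => F x.1 0 :=
      hF.comp (continuous_fst.prodMk continuous_const)
    exact (hF0.mul hF0).measurable
  have hplus : Continuous fun y : (ℝ × Rd d) × Sd d => F y.1.1 (kplus y.1.2 y.2) :=
    hF.comp (f := fun y : (ℝ × Rd d) × Sd d => (y.1.1, kplus y.1.2 y.2))
      (by unfold kplus; fun_prop)
  have hminus : Continuous fun y : (ℝ × Rd d) × Sd d => F y.1.1 (kminus y.1.2 y.2) :=
    hF.comp (f := fun y : (ℝ × Rd d) × Sd d => (y.1.1, kminus y.1.2 y.2))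
      (by unfold kminus; fun_prop)
  have hdot : Measurable fun y : (ℝ × Rd d) × Sd d => khatDot y.1.2 y.2 := by
    unfold khatDot; fun_prop
  refine StronglyMeasurable.measurable (StronglyMeasurable.integral_prod_right'
    (f := fun y : (ℝ × Rd d) × Sd d =>
      (g (khatDot y.1.2 y.2) : ℂ) * F y.1.1 (kplus y.1.2 y.2) * F y.1.1 (kminus y.1.2 y.2)) ?_)
  exact (((Complex.measurable_ofReal.comp (hg_meas.comp hdot)).mul hplus.measurable).mul
    hminus.measurable).stronglyMeasurable

namespace IsMildSolution
variable {d : ℕ} {g : ℝ → ℝ} {A : Matrix (Fin d) (Fin d) ℝ} {φ₀ φ₁₀ φ₂₀ : Rd d → ℂ}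
  {φ φ₁ φ₂ : ℝ → Rd d → ℂ}

open Filter Topology in
lemma tendstoUniformly_max (h : IsMildSolution g A φ₀ φ) (t : ℝ) :
    TendstoUniformly (fun τ => φ (max τ 0)) (φ (max t 0)) (𝓝 t) := by
  rw [Metric.tendstoUniformly_iff]
  intro ε hε
  obtain ⟨δ, hδ, hclose⟩ := h.2.1 (max t 0) (le_max_right t 0) (ε / 2) (half_pos hε)
  filter_upwards [Metric.ball_mem_nhds t hδ] with s hs k
  rw [dist_comm, dist_eq_norm]
  exact (hclose _ (le_max_right s 0) ((abs_max_sub_max_le_abs s t 0).trans_lt hs) k).trans_lt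
    (half_lt_self hε)

lemma intervalIntegrable_duhamel (hg : IsCollisionKernel d g) (h : IsMildSolution g A φ₀ φ)
    {t : ℝ} (ht : 0 ≤ t) (k : Rd d) :
    IntervalIntegrable
      (fun τ => (Real.exp (-(t - τ)) : ℂ) * Gam g (φ τ) (expA A (-(t - τ)) k)) volume 0 t := by
  -- `φ τ` is only controlled for `τ ≥ 0`, so measurability is checked on `τ ↦ φ (max τ 0)`.
  have hφ : Continuous (Function.uncurry fun τ => φ (max τ 0)) :=
    continuous_uncurry_of_tendstoUniformly (fun τ => (h.1 _ (le_max_right τ 0)).continuous)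
      h.tendstoUniformly_max
  have hq : Continuous fun τ => expA A (-(t - τ)) k :=
    (continuous_expA_apply A k).comp (by fun_prop)
  have hm : Measurable fun τ =>
      (Real.exp (-(t - τ)) : ℂ) * Gam g (φ (max τ 0)) (expA A (-(t - τ)) k) :=
    (by fun_prop : Measurable fun τ : ℝ => (Real.exp (-(t - τ)) : ℂ)).mul
      ((measurable_Gam_uncurry hg.measurable hφ).comp (measurable_id.prodMk hq.measurable))
  refine IntervalIntegrable.mono_fun'
    ((by fun_prop : Continuous fun τ : ℝ => Real.exp (-(t - τ))).intervalIntegrable 0 t)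
    (hm.aestronglyMeasurable.congr ?_) ?_
  all_goals
    rw [Set.uIoc_of_le ht]
    refine ae_restrict_of_forall_mem measurableSet_Ioc fun τ hτ => ?_
  · simp only [max_eq_left hτ.1.le]
  · dsimp only
    rw [norm_mul, Complex.norm_real, Real.norm_of_nonneg (Real.exp_nonneg _)]
    exact mul_le_of_le_one_right (Real.exp_nonneg _)
      (norm_Gam_le_one hg.nonneg hg.integral_eq_one ((h.1 τ hτ.1.le).norm_le_one) _)

lemma norm_sub_le_duhamel (hg : IsCollisionKernel d g) (h₁ : IsMildSolution g A φ₁₀ φ₁)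
    (h₂ : IsMildSolution g A φ₂₀ φ₂) {t : ℝ} (ht : 0 ≤ t) (k : Rd d) {G : ℝ → ℝ}
    (hG : IntervalIntegrable G volume 0 t)
    (hbound : ∀ τ ∈ Set.Ioc 0 t, Real.exp (-(t - τ)) *
      ‖Gam g (φ₁ τ) (expA A (-(t - τ)) k) - Gam g (φ₂ τ) (expA A (-(t - τ)) k)‖ ≤ G τ) :
    ‖φ₁ t k - φ₂ t k‖ ≤
      Real.exp (-t) * ‖φ₁₀ (expA A (-t) k) - φ₂₀ (expA A (-t) k)‖ + ∫ τ in (0 : ℝ)..t, G τ := by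
  rw [h₁.2.2 t ht k, h₂.2.2 t ht k, add_sub_add_comm, ← mul_sub,
    ← intervalIntegral.integral_sub (h₁.intervalIntegrable_duhamel hg ht k)
      (h₂.intervalIntegrable_duhamel hg ht k)]
  refine (norm_add_le _ _).trans (add_le_add ?_ ?_)
  · rw [norm_mul, Complex.norm_real, Real.norm_of_nonneg (Real.exp_nonneg _)]
  · refine intervalIntegral.norm_integral_le_of_norm_le ht (.of_forall fun τ hτ => ?_) hG
    rw [← mul_sub, norm_mul, Complex.norm_real, Real.norm_of_nonneg (Real.exp_nonneg _)]
    exact hbound τ hτ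

end IsMildSolution

open Finset in
def expTrunc (n : ℕ) (x : ℝ) : ℝ := ∑ j ∈ range n, x ^ j / j.factorial

lemma expTrunc_nonneg (n : ℕ) {x : ℝ} (hx : 0 ≤ x) : 0 ≤ expTrunc n x :=
  Finset.sum_nonneg fun _ _ => by positivity

lemma expTrunc_le_exp (n : ℕ) {x : ℝ} (hx : 0 ≤ x) : expTrunc n x ≤ Real.exp x :=
  Real.sum_le_exp_of_nonneg hx n

lemma integral_mul_pow_div_factorial (c t : ℝ) (n : ℕ) :
    ∫ τ in (0 : ℝ)..t, c * ((c * τ) ^ n / n.factorial) =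
      (c * t) ^ (n + 1) / (n + 1).factorial := by
  simp_rw [mul_pow, div_eq_mul_inv]
  rw [show (fun τ : ℝ => c * (c ^ n * τ ^ n * (n.factorial : ℝ)⁻¹))
      = fun τ => (c ^ (n + 1) * (n.factorial : ℝ)⁻¹) * τ ^ n by ext; ring,
    intervalIntegral.integral_const_mul, integral_pow, Nat.factorial_succ]
  push_cast
  field_simp
  ring

lemma integral_mul_expTrunc (c t : ℝ) (n : ℕ) :
    ∫ τ in (0 : ℝ)..t, c * expTrunc n (c * τ) = expTrunc (n + 1) (c * t) - 1 := by
  simp_rw [expTrunc, Finset.mul_sum]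
  rw [intervalIntegral.integral_finsetSum
      fun j _ => (by fun_prop : Continuous _).intervalIntegrable _ _,
    Finset.sum_range_succ']
  simp only [integral_mul_pow_div_factorial]
  simp

theorem IsMildSolution.norm_sub_le_iterate {d : ℕ} {g : ℝ → ℝ} (hg : IsCollisionKernel d g)
    {A : Matrix (Fin d) (Fin d) ℝ} {p θ B : ℝ} (hp : 0 < p) (hθ0 : 0 ≤ θ)
    (hθ : ∀ ω : Rd d, ‖ω‖ = 1 →
      ∫ n, g ⟪ω, (n : Rd d)⟫ * splitPowSum p ⟪ω, (n : Rd d)⟫ ∂(sphMeasure d) = θ)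
    (hB : 0 ≤ B) {φ₁₀ φ₂₀ : Rd d → ℂ} {φ₁ φ₂ : ℝ → Rd d → ℂ}
    (h₁ : IsMildSolution g A φ₁₀ φ₁) (h₂ : IsMildSolution g A φ₂₀ φ₂)
    (h0 : ∀ k : Rd d, ‖φ₁₀ k - φ₂₀ k‖ ≤ B * ‖k‖ ^ p) (n : ℕ) {t : ℝ} (ht : 0 ≤ t) (k : Rd d) :
    ‖φ₁ t k - φ₂ t k‖ ≤ B * ‖k‖ ^ p * Real.exp (-(1 - p * opN A) * t) * expTrunc n (θ * t)
      + 2 * ((2 * t) ^ n / n.factorial) := by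
  induction n generalizing t k with
  | zero =>
    simp only [expTrunc, Finset.range_zero, Finset.sum_empty, mul_zero, zero_add, pow_zero,
      Nat.factorial_zero, Nat.cast_one, div_one, mul_one]
    linarith [_root_.norm_sub_le (φ₁ t k) (φ₂ t k), (h₁.1 t ht).norm_le_one k,
      (h₂.1 t ht).norm_le_one k]
  | succ n ih =>
    set a := p * opN A
    set C := B * ‖k‖ ^ p * Real.exp (-(1 - a) * t) with hC
    have hinit : Real.exp (-t) * ‖φ₁₀ (expA A (-t) k) - φ₂₀ (expA A (-t) k)‖ ≤ C := by
      calc _ ≤ Real.exp (-t) * (B * (Real.exp (a * t) * ‖k‖ ^ p)) := by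
            gcongr
            exact (h0 _).trans (mul_le_mul_of_nonneg_left (rpow_norm_expA_neg_le A hp.le ht k) hB)
        _ = C := by
            rw [hC, show -(1 - a) * t = -t + a * t by ring, Real.exp_add]; ring
    have hstep : ∀ τ ∈ Set.Ioc 0 t, Real.exp (-(t - τ)) *
        ‖Gam g (φ₁ τ) (expA A (-(t - τ)) k) - Gam g (φ₂ τ) (expA A (-(t - τ)) k)‖ ≤
        C * (θ * expTrunc n (θ * τ)) + 2 * (2 * ((2 * τ) ^ n / n.factorial)) := by
      rintro τ ⟨hτ, hτt⟩
      have hβ : ∀ x, ‖φ₁ τ x - φ₂ τ x‖ ≤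
          B * Real.exp (-(1 - a) * τ) * expTrunc n (θ * τ) * ‖x‖ ^ p
            + 2 * ((2 * τ) ^ n / n.factorial) := fun x =>
        (ih hτ.le x).trans_eq (by ring)
      have hE := expTrunc_nonneg n (mul_nonneg hθ0 hτ.le)
      refine (hg.exp_mul_norm_Gam_sub_le A hp hθ (h₁.1 τ hτ.le) (h₂.1 τ hτ.le)
        (by positivity) (by positivity) hβ (sub_nonneg.mpr hτt) k).trans_eq ?_
      rw [hC, show -(1 - a) * t = -(1 - a) * τ + -(1 - a) * (t - τ) by ring, Real.exp_add]; ring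
    have hE : Continuous fun τ => C * (θ * expTrunc n (θ * τ)) := by unfold expTrunc; fun_prop
    have hF : Continuous fun τ : ℝ => 2 * (2 * ((2 * τ) ^ n / n.factorial)) := by fun_prop
    refine (h₁.norm_sub_le_duhamel hg h₂ ht k ((hE.add hF).intervalIntegrable 0 t) hstep).trans ?_
    simp only [Pi.add_apply]
    rw [intervalIntegral.integral_add (hE.intervalIntegrable 0 t) (hF.intervalIntegrable 0 t),
      intervalIntegral.integral_const_mul C, intervalIntegral.integral_const_mul 2,
      integral_mul_expTrunc, integral_mul_pow_div_factorial]
    linarith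

theorem mildSolutions_exponential_contraction_general (d : ℕ) (hd : 2 ≤ d)
    (g : ℝ → ℝ) (hg_meas : Measurable g) (hg_nonneg : ∀ x, 0 ≤ g x)
    (hg_norm : ∀ ω : Rd d, ‖ω‖ = 1 → ∫ n, g ⟪ω, (n : Rd d)⟫ ∂(sphMeasure d) = 1)
    (A : Matrix (Fin d) (Fin d) ℝ)
    (p : ℝ) (hp : 0 < p)
    (lam : ℝ)
    (hlam : ∀ ω : Rd d, ‖ω‖ = 1 →
      (∫ n, g ⟪ω, (n : Rd d)⟫ *
          (1 - ((1 + ⟪ω, (n : Rd d)⟫) / 2) ^ (p / 2)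
             - ((1 - ⟪ω, (n : Rd d)⟫) / 2) ^ (p / 2)) ∂(sphMeasure d)) = lam)
    (φ₁₀ φ₂₀ : Rd d → ℂ)
    (φ₁ φ₂ : ℝ → Rd d → ℂ)
    (h₁ : IsMildSolution g A φ₁₀ φ₁) (h₂ : IsMildSolution g A φ₂₀ φ₂)
    (B : ℝ) (hB : 0 < B)
    (h0 : ∀ k : Rd d, ‖φ₁₀ k - φ₂₀ k‖ ≤ B * ‖k‖ ^ p) :
    ∀ t, 0 ≤ t → ∀ k : Rd d,
      ‖φ₁ t k - φ₂ t k‖ ≤ B * ‖k‖ ^ p * Real.exp (-(lam - p * opN A) * t) := by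
  have hg : IsCollisionKernel d g := ⟨hg_meas, hg_nonneg, hg_norm⟩
  have hθ : ∀ ω : Rd d, ‖ω‖ = 1 →
      ∫ n, g ⟪ω, (n : Rd d)⟫ * splitPowSum p ⟪ω, (n : Rd d)⟫ ∂(sphMeasure d) = 1 - lam :=
    fun ω hω => integral_mul_splitPowSum_eq hp.le hg_nonneg hω (hg_norm ω hω) (hlam ω hω)
  have hθ0 : 0 ≤ 1 - lam := nonneg_of_integral_mul_splitPowSum_eq (by omega) hg_nonneg hθ
  intro t ht k
  have hexp : Real.exp (-(1 - p * opN A) * t) * Real.exp ((1 - lam) * t)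
      = Real.exp (-(lam - p * opN A) * t) := by rw [← Real.exp_add]; ring_nf
  have hbound : ∀ n : ℕ, ‖φ₁ t k - φ₂ t k‖ ≤
      B * ‖k‖ ^ p * Real.exp (-(lam - p * opN A) * t) + 2 * ((2 * t) ^ n / n.factorial) := by
    intro n
    refine (h₁.norm_sub_le_iterate hg hp hθ0 hθ hB.le h₂ h0 n ht k).trans (add_le_add_left ?_ _)
    rw [← hexp, ← mul_assoc]
    exact mul_le_mul_of_nonneg_left (expTrunc_le_exp n (mul_nonneg hθ0 ht)) (by positivity)
  have hlim : Filter.Tendsto (fun n : ℕ => 2 * ((2 * t) ^ n / n.factorial)) Filter.atTop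
      (nhds 0) := by
    simpa using (FloorSemiring.tendsto_pow_div_factorial_atTop (2 * t)).const_mul 2
  simpa using ge_of_tendsto (tendsto_const_nhds.add hlim) (.of_forall hbound)

/-- Exponential contraction of two mild solutions whose initial data
    are tangent of order p at k = 0. -/
theorem mildSolutions_exponential_contraction (d : ℕ) (hd : 2 ≤ d)
    (g : ℝ → ℝ) (hg_meas : Measurable g) (hg_nonneg : ∀ x, 0 ≤ g x)
    (hg_norm : ∀ ω : Rd d, ‖ω‖ = 1 → ∫ n, g ⟪ω, (n : Rd d)⟫ ∂(sphMeasure d) = 1)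
    (A : Matrix (Fin d) (Fin d) ℝ)
    (p : ℝ) (hp : 0 < p)
    (lam : ℝ)
    (hlam : ∀ ω : Rd d, ‖ω‖ = 1 →
      (∫ n, g ⟪ω, (n : Rd d)⟫ *
          (1 - ((1 + ⟪ω, (n : Rd d)⟫) / 2) ^ (p / 2)
             - ((1 - ⟪ω, (n : Rd d)⟫) / 2) ^ (p / 2)) ∂(sphMeasure d)) = lam)
    (φ₁₀ φ₂₀ : Rd d → ℂ) (hφ₁₀ : IsCharFun φ₁₀) (hφ₂₀ : IsCharFun φ₂₀)
    (φ₁ φ₂ : ℝ → Rd d → ℂ)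
    (h₁ : IsMildSolution g A φ₁₀ φ₁) (h₂ : IsMildSolution g A φ₂₀ φ₂)
    (B : ℝ) (hB : 0 < B)
    (h0 : ∀ k : Rd d, ‖φ₁₀ k - φ₂₀ k‖ ≤ B * ‖k‖ ^ p) :
    ∀ t, 0 ≤ t → ∀ k : Rd d,
      ‖φ₁ t k - φ₂ t k‖ ≤ B * ‖k‖ ^ p * Real.exp (-(lam - p * opN A) * t) :=
  mildSolutions_exponential_contraction_general d hd g hg_meas hg_nonneg hg_norm A p hp lam hlam φ₁₀
    φ₂₀ φ₁ φ₂ h₁ h₂ B hB h0
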